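/- Let N ≥ 1, let σ_w, σ_n, σ_wn > 0 satisfy σ_wn < (σ_w + σ_n)/2, let Δt > 0, f ∈ ℝ^N, let Q be a symmetric positive-semidefinite real N×N matrix, and let Sᵏ ∈ ℝ^N satisfy 0 < Sᵏ_i < 1 for all i; set β = Σ_i Sᵏ_i. Let Φ : [0,1] → ℝ be Φ(x) = x·ln x for x > 0 and Φ(0) = 0, and for a ∈ (0,1) let H_a^0 : [0,1] → ℝ be H_a^0(x) = ∫_a^x H_a^1(t) dt, where H_a^1(t) = (t ln t − a ln a)/(t − a) for t ≠ a and H_a^1(a) = ln a + 1 (this integral converges at the endpoints 0 and 1, so H_a^0 is continuous on [0,1]). Define J(S) = (1/2)·(S − Sᵏ)ᵀ Q (S − Sᵏ) + Σ_i [ Δt·(Φ(S_i) + Φ(1 − S_i)) + σ_w·H⁰_{Sᵏ_i}(S_i) + σ_n·H⁰_{1−Sᵏ_i}(1 − S_i) − (σ_wn/2)·S_i² + f_i·S_i ] on the compact convex set K = { S ∈ ℝ^N : 0 ≤ S_i ≤ 1 for all i, and Σ_i S_i = β }. Then J attains its minimum over K at a unique point S*, and this minimizer satisfies 0 < S*_i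 < 1 for every i. -/

import Mathlib

/-- `H_a^1` : the secant slope of `t ↦ t log t` at `a`, extended continuously at `t = a`. -/
noncomputable def Hone (a t : ℝ) : ℝ :=
  if t = a then Real.log a + 1 else (t * Real.log t - a * Real.log a) / (t - a)

/-- `H_a^0(x) = ∫_a^x H_a^1(t) dt`. -/
noncomputable def Hzero (a x : ℝ) : ℝ := ∫ t in a..x, Hone a t

/-!
The energy `J` splits into a convex quadratic, the site potentials
`σw Hzero a x + σn Hzero (1 - a) (1 - x) - σwn x² / 2 + f x`, and `Δt` times the negative binary
entropy. `Hone a t - t / 2` is the (derivative-extended) secant slope at `a` of the convex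
function `x log x - x² / 2` plus `a / 2`, hence monotone, so `Hzero a x - x² / 4` is convex and
`σwn < (σw + σn) / 2` makes each site potential convex. The entropy term is strictly convex, so `J`
is strictly convex on the compact convex set `K`: a minimizer exists and is unique.

It is interior because the binary entropy has infinite slope at `0` and `1`: if a coordinate of
`S` sits at `0` (resp. `1`), moving mass `ε` into (resp. out of) it from (resp. to) another
coordinate changes `J` by at most `ε (M + Δt log ε)`, the other terms having slope at most `M` by
convexity, and this is negative for small `ε`.
-/

open Real Set
open scoped Matrix

lemma ConvexOn.monotoneOn_dslope {s : Set ℝ} {f : ℝ → ℝ} {a : ℝ} (hf : ConvexOn ℝ s f)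
    (ha : a ∈ s) (hfa : DifferentiableAt ℝ f a) : MonotoneOn (dslope f a) s := by
  intro x hx y hy hxy
  obtain hxa | hxa := eq_or_ne x a <;> obtain hya | hya := eq_or_ne y a
  · rw [hxa, hya]
  · rw [hxa, dslope_same, dslope_of_ne _ hya]
    exact hf.deriv_le_slope ha hy ((hxa ▸ hxy).lt_of_ne hya.symm) hfa
  · rw [hya, dslope_same, dslope_of_ne _ hxa, slope_comm]
    exact hf.slope_le_deriv hx ha ((hya ▸ hxy).lt_of_ne hxa) hfa
  · rw [dslope_of_ne _ hxa, dslope_of_ne _ hya]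
    exact hf.slope_mono ha ⟨hx, hxa⟩ ⟨hy, hya⟩ hxy

lemma Hone_eq_dslope {a : ℝ} (ha : a ≠ 0) : Hone a = dslope (fun x => x * log x) a := by
  ext t
  rcases eq_or_ne t a with rfl | hta
  · simp [Hone, deriv_mul_log ha]
  · simp [Hone, hta, dslope_of_ne, slope_def_field]

lemma continuous_Hone {a : ℝ} (ha : a ≠ 0) : Continuous (Hone a) := by
  rw [Hone_eq_dslope ha, continuous_iff_continuousAt]
  intro t
  rcases eq_or_ne t a with rfl | hta
  · exact continuousAt_dslope_same.2 (hasDerivAt_mul_log ha).differentiableAt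
  · exact (continuousAt_dslope_of_ne hta).2 continuous_mul_log.continuousAt

lemma hasDerivAt_Hzero {a : ℝ} (ha : a ≠ 0) (x : ℝ) : HasDerivAt (Hzero a) (Hone a x) x :=
  ((continuous_Hone ha).integral_hasStrictDerivAt a x).hasDerivAt

lemma hasDerivAt_mul_log_sub_sq_div_two {x : ℝ} (hx : x ≠ 0) :
    HasDerivAt (fun x : ℝ => x * log x - x ^ 2 / 2) (log x + 1 - x) x :=
  (hasDerivAt_mul_log hx).sub (by simpa using (hasDerivAt_pow 2 x).div_const 2)

lemma convexOn_mul_log_sub_sq_div_two :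
    ConvexOn ℝ (Icc 0 1) fun x : ℝ => x * log x - x ^ 2 / 2 := by
  refine convexOn_of_hasDerivWithinAt2_nonneg (convex_Icc 0 1) (by fun_prop)
    (f' := fun x => log x + 1 - x) (f'' := fun x => x⁻¹ - 1) ?_ ?_ ?_ <;> rw [interior_Icc]
  · exact fun x hx => (hasDerivAt_mul_log_sub_sq_div_two hx.1.ne').hasDerivWithinAt
  · intro x hx
    exact (((hasDerivAt_log hx.1.ne').add_const 1).sub (hasDerivAt_id x)).hasDerivWithinAt
  · intro x hx
    simpa using (one_le_inv₀ hx.1).2 hx.2.le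

lemma monotoneOn_Hone_sub_half {a : ℝ} (ha₀ : 0 < a) (ha₁ : a ≤ 1) :
    MonotoneOn (fun t => Hone a t - t / 2) (Icc 0 1) := by
  have hdslope : ∀ t,
      Hone a t - t / 2 = dslope (fun x : ℝ => x * log x - x ^ 2 / 2) a t + a / 2 := by
    intro t
    rcases eq_or_ne t a with rfl | hta
    · rw [dslope_same, (hasDerivAt_mul_log_sub_sq_div_two ha₀.ne').deriv]
      rw [Hone, if_pos rfl]
      ring
    · have : t - a ≠ 0 := sub_ne_zero.2 hta
      rw [dslope_of_ne _ hta, slope_def_field]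
      simp only [Hone, hta, if_false]
      field_simp
      ring
  intro s hs t ht hst
  simp only [hdslope]
  gcongr
  exact convexOn_mul_log_sub_sq_div_two.monotoneOn_dslope ⟨ha₀.le, ha₁⟩ (by fun_prop) hs ht hst

noncomputable def sitePotential (σw σn σwn a b x : ℝ) : ℝ :=
  σw * Hzero a x + σn * Hzero (1 - a) (1 - x) - σwn / 2 * x ^ 2 + b * x

lemma hasDerivAt_sitePotential {σw σn σwn a b : ℝ} (ha : a ∈ Ioo (0 : ℝ) 1) (x : ℝ) :
    HasDerivAt (sitePotential σw σn σwn a b)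
      (σw * Hone a x - σn * Hone (1 - a) (1 - x) - σwn * x + b) x := by
  have hw := hasDerivAt_Hzero ha.1.ne' x
  have hn := (hasDerivAt_Hzero (sub_pos.2 ha.2).ne' (1 - x)).comp x
    ((hasDerivAt_id x).const_sub 1)
  have hsq := (hasDerivAt_pow 2 x).const_mul (σwn / 2)
  refine ((((hw.const_mul σw).add (hn.const_mul σn)).sub hsq).add
    ((hasDerivAt_id x).const_mul b)).congr_deriv ?_
  norm_num
  ring

lemma convexOn_sitePotential {σw σn σwn a b : ℝ} (hσw : 0 ≤ σw) (hσn : 0 ≤ σn)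
    (hσwn : σwn ≤ (σw + σn) / 2) (ha : a ∈ Ioo (0 : ℝ) 1) :
    ConvexOn ℝ (Icc 0 1) (sitePotential σw σn σwn a b) := by
  have hd := hasDerivAt_sitePotential (σw := σw) (σn := σn) (σwn := σwn) (b := b) ha
  refine MonotoneOn.convexOn_of_deriv (convex_Icc 0 1)
    (fun x _ => (hd x).continuousAt.continuousWithinAt)
    (fun x _ => (hd x).differentiableAt.differentiableWithinAt) ?_
  rw [interior_Icc]
  intro x hx y hy hxy
  rw [(hd x).deriv, (hd y).deriv]
  have hw := monotoneOn_Hone_sub_half ha.1 ha.2.le (Ioo_subset_Icc_self hx)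
    (Ioo_subset_Icc_self hy) hxy
  have hn := monotoneOn_Hone_sub_half (a := 1 - a) (sub_pos.2 ha.2) (by linarith [ha.1])
    (show 1 - y ∈ Icc (0 : ℝ) 1 from ⟨by linarith [hy.2], by linarith [hy.1]⟩)
    (show 1 - x ∈ Icc (0 : ℝ) 1 from ⟨by linarith [hx.2], by linarith [hx.1]⟩) (by linarith)
  simp only at hw hn
  linarith [mul_le_mul_of_nonneg_left hw hσw, mul_le_mul_of_nonneg_left hn hσn,
    mul_le_mul_of_nonneg_left hxy (sub_nonneg.2 hσwn)]

lemma StrictConvexOn.const_mul {E : Type*} [AddCommMonoid E] [Module ℝ E] {s : Set E}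
    {f : E → ℝ} {c : ℝ} (hf : StrictConvexOn ℝ s f) (hc : 0 < c) :
    StrictConvexOn ℝ s fun x => c * f x := by
  refine ⟨hf.1, fun x hx y hy hxy a b ha hb hab => ?_⟩
  have := mul_lt_mul_of_pos_left (hf.2 hx hy hxy ha hb hab) hc
  simp only [smul_eq_mul] at this ⊢
  linarith

lemma ConvexOn.comp_add_smul {E : Type*} [AddCommGroup E] [Module ℝ E] {C : Set E} {G : E → ℝ}
    (hG : ConvexOn ℝ C G) {x d : E} {t : Set ℝ} (ht : Convex ℝ t)
    (hmem : ∀ ε ∈ t, x + ε • d ∈ C) : ConvexOn ℝ t fun ε => G (x + ε • d) := by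
  refine ⟨ht, fun a ha b hb p q hp hq hpq => ?_⟩
  have hx : x + (p • a + q • b) • d = p • (x + a • d) + q • (x + b • d) := by
    linear_combination (norm := module) hpq.symm • x
  simpa only [hx] using hG.2 (hmem a ha) (hmem b hb) hp hq hpq

lemma exists_lt_of_convexOn_sub_binEntropy {R : ℝ → ℝ} {c δ : ℝ} (hR : ConvexOn ℝ (Icc 0 δ) R)
    (hc : 0 < c) (hδ : 0 < δ) (hδ₁ : δ ≤ 1) : ∃ ε ∈ Ioo 0 δ, R ε - c * binEntropy ε < R 0 := by
  set M := (R δ - R 0) / δ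
  set ε := min (δ / 2) (exp (-M / c) / 2)
  have hε₀ : 0 < ε := lt_min (by positivity) (by positivity)
  have hεδ : ε < δ := (min_le_left _ _).trans_lt (half_lt_self hδ)
  have hlog : c * log ε + M < 0 := by
    have : log ε < -M / c := by
      rw [← log_exp (-M / c)]
      exact log_lt_log hε₀ ((min_le_right _ _).trans_lt (half_lt_self (exp_pos _)))
    rw [lt_div_iff₀ hc] at this
    linarith
  have hsecant : R ε ≤ R 0 + ε * M := by
    have := hR.secant_mono_aux1 (left_mem_Icc.2 hδ.le) (right_mem_Icc.2 hδ.le) hε₀ hεδ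
    rw [mul_div_assoc', ← sub_le_iff_le_add', le_div_iff₀ hδ]
    linarith
  have hent : -(ε * log ε) ≤ binEntropy ε := by
    rw [binEntropy_eq_negMulLog_add_negMulLog_one_sub, negMulLog, neg_mul]
    linarith [negMulLog_nonneg (sub_nonneg.2 (hεδ.le.trans hδ₁)) (sub_le_self 1 hε₀.le)]
  refine ⟨ε, ⟨hε₀, hεδ⟩, ?_⟩
  nlinarith [mul_le_mul_of_nonneg_left hent hc.le, mul_neg_of_pos_of_neg hε₀ hlog]

section Cube

variable {ι : Type*}

lemma Matrix.PosSemidef.convexOn_dotProduct_mulVec_sub [Fintype ι] {Q : Matrix ι ι ℝ}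
    (hQ : Q.PosSemidef) (c : ι → ℝ) : ConvexOn ℝ univ fun x => (x - c) ⬝ᵥ Q *ᵥ (x - c) := by
  refine ⟨convex_univ, fun x _ y _ a b ha hb hab => ?_⟩
  have hmid : a • x + b • y - c = a • (x - c) + b • (y - c) := by
    linear_combination (norm := module) hab • c
  have hgap : a * ((x - c) ⬝ᵥ Q *ᵥ (x - c)) + b * ((y - c) ⬝ᵥ Q *ᵥ (y - c)) -
      (a • (x - c) + b • (y - c)) ⬝ᵥ Q *ᵥ (a • (x - c) + b • (y - c)) =
      a * b * ((x - y) ⬝ᵥ Q *ᵥ (x - y)) := by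
    obtain rfl : b = 1 - a := by linarith
    have hxy : x - y = (x - c) - (y - c) := by abel
    rw [hxy]
    simp only [Matrix.mulVec_add, Matrix.mulVec_sub, Matrix.mulVec_smul, dotProduct_add,
      add_dotProduct, dotProduct_sub, sub_dotProduct, dotProduct_smul, smul_dotProduct,
      smul_eq_mul]
    ring
  simp only [hmid, smul_eq_mul]
  have hQxy : 0 ≤ (x - y) ⬝ᵥ Q *ᵥ (x - y) := by
    simpa only [star_trivial] using hQ.dotProduct_mulVec_nonneg (x - y)
  nlinarith [mul_nonneg (mul_nonneg ha hb) hQxy]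

lemma convexOn_sum_apply {s : Finset ι} {t : Set ℝ} {g : ι → ℝ → ℝ} (ht : Convex ℝ t)
    (hg : ∀ i ∈ s, ConvexOn ℝ t (g i)) :
    ConvexOn ℝ (univ.pi fun _ => t) fun x => ∑ i ∈ s, g i (x i) := by
  refine ⟨convex_pi fun _ _ => ht, fun x hx y hy a b ha hb hab => ?_⟩
  simp only [Pi.add_apply, Pi.smul_apply, smul_eq_mul, Finset.mul_sum, ← Finset.sum_add_distrib]
  exact Finset.sum_le_sum fun i hi =>
    (hg i hi).2 (hx i (mem_univ i)) (hy i (mem_univ i)) ha hb hab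

lemma strictConvexOn_sum_apply [Fintype ι] {t : Set ℝ} {g : ι → ℝ → ℝ} (ht : Convex ℝ t)
    (hg : ∀ i, StrictConvexOn ℝ t (g i)) :
    StrictConvexOn ℝ (univ.pi fun _ => t) fun x => ∑ i, g i (x i) := by
  refine ⟨convex_pi fun _ _ => ht, fun x hx y hy hxy a b ha hb hab => ?_⟩
  obtain ⟨k, hk⟩ := Function.ne_iff.1 hxy
  simp only [Pi.add_apply, Pi.smul_apply, smul_eq_mul, Finset.mul_sum, ← Finset.sum_add_distrib]
  exact Finset.sum_lt_sum
    (fun i _ => (hg i).convexOn.2 (hx i (mem_univ i)) (hy i (mem_univ i)) ha.le hb.le hab)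
    ⟨k, Finset.mem_univ k, (hg k).2 (hx k (mem_univ k)) (hy k (mem_univ k)) hk ha hb hab⟩

variable [Fintype ι]

variable (ι) in
def cubeSlice (β : ℝ) : Set (ι → ℝ) := {S | (∀ i, S i ∈ Icc (0 : ℝ) 1) ∧ ∑ i, S i = β}

lemma cubeSlice_subset_pi (β : ℝ) : cubeSlice ι β ⊆ univ.pi fun _ => Icc 0 1 :=
  fun _ hS i _ => hS.1 i

lemma convex_cubeSlice (β : ℝ) : Convex ℝ (cubeSlice ι β) := by
  intro S hS T hT a b ha hb hab
  refine ⟨fun i => convex_Icc 0 1 (hS.1 i) (hT.1 i) ha hb hab, ?_⟩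
  simp [Finset.sum_add_distrib, ← Finset.mul_sum, hS.2, hT.2, ← add_mul, hab]

lemma isCompact_cubeSlice (β : ℝ) : IsCompact (cubeSlice ι β) := by
  refine (isCompact_univ_pi fun _ => isCompact_Icc).of_isClosed_subset ?_ (cubeSlice_subset_pi β)
  have hbox : {S : ι → ℝ | ∀ i, S i ∈ Icc (0 : ℝ) 1} = univ.pi fun _ => Icc 0 1 := by
    ext; exact mem_univ_pi.symm
  exact (hbox ▸ isClosed_set_pi fun _ _ => isClosed_Icc).inter
    (isClosed_eq (by fun_prop) continuous_const)

lemma add_smul_single_sub_single_mem_cubeSlice [DecidableEq ι] {β : ℝ} {S : ι → ℝ}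
    (hS : S ∈ cubeSlice ι β) {i j : ι} (hij : i ≠ j) {ε : ℝ} (hε : 0 ≤ ε) (hεi : ε ≤ 1 - S i)
    (hεj : ε ≤ S j) : S + ε • (Pi.single i 1 - Pi.single j 1) ∈ cubeSlice ι β := by
  refine ⟨fun m => ?_, ?_⟩
  · have hm := hS.1 m
    rcases eq_or_ne m i with rfl | hmi
    · simp only [Pi.add_apply, Pi.smul_apply, Pi.sub_apply, Pi.single_eq_same,
        Pi.single_eq_of_ne hij, smul_eq_mul]
      exact ⟨by linarith [hm.1], by linarith⟩
    rcases eq_or_ne m j with rfl | hmj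
    · simp only [Pi.add_apply, Pi.smul_apply, Pi.sub_apply, Pi.single_eq_same,
        Pi.single_eq_of_ne hmi, smul_eq_mul]
      exact ⟨by linarith, by linarith [hm.2]⟩
    · simpa [hmi, hmj] using hm
  · simp [Finset.sum_add_distrib, ← Finset.mul_sum, Finset.sum_sub_distrib, hS.2]

end Cube

section Energy

variable {ι : Type*} [Fintype ι] (Q : Matrix ι ι ℝ) (Sk f : ι → ℝ) (Δt σw σn σwn : ℝ)

noncomputable def energy (S : ι → ℝ) : ℝ :=
  1 / 2 * ((S - Sk) ⬝ᵥ Q *ᵥ (S - Sk)) +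
    ∑ i, (Δt * (S i * log (S i) + (1 - S i) * log (1 - S i)) + σw * Hzero (Sk i) (S i) +
      σn * Hzero (1 - Sk i) (1 - S i) - σwn / 2 * S i ^ 2 + f i * S i)

lemma energy_eq (S : ι → ℝ) :
    energy Q Sk f Δt σw σn σwn S = 1 / 2 * ((S - Sk) ⬝ᵥ Q *ᵥ (S - Sk)) +
      ∑ i, sitePotential σw σn σwn (Sk i) (f i) (S i) + Δt * ∑ i, -binEntropy (S i) := by
  rw [energy, add_assoc, Finset.mul_sum, ← Finset.sum_add_distrib]
  congr 2
  ext i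
  rw [sitePotential, binEntropy_eq_negMulLog_add_negMulLog_one_sub, negMulLog, negMulLog]
  ring

variable {Q Sk f Δt σw σn σwn}

lemma continuous_energy (hSk : ∀ i, Sk i ∈ Ioo (0 : ℝ) 1) :
    Continuous (energy Q Sk f Δt σw σn σwn) := by
  have hsite : ∀ i, Continuous (sitePotential σw σn σwn (Sk i) (f i)) := fun i =>
    continuous_iff_continuousAt.2 fun x => (hasDerivAt_sitePotential (hSk i) x).continuousAt
  rw [show energy Q Sk f Δt σw σn σwn = _ from funext (energy_eq Q Sk f Δt σw σn σwn)]
  fun_prop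

lemma convexOn_quadratic_add_sitePotential (hσw : 0 ≤ σw) (hσn : 0 ≤ σn)
    (hσwn : σwn ≤ (σw + σn) / 2) (hQ : Q.PosSemidef) (hSk : ∀ i, Sk i ∈ Ioo (0 : ℝ) 1) :
    ConvexOn ℝ (univ.pi fun _ => Icc 0 1) fun S =>
      1 / 2 * ((S - Sk) ⬝ᵥ Q *ᵥ (S - Sk)) + ∑ i, sitePotential σw σn σwn (Sk i) (f i) (S i) :=
  (((hQ.convexOn_dotProduct_mulVec_sub Sk).smul (by norm_num : (0 : ℝ) ≤ 1 / 2)).subset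
    (subset_univ _) (convex_pi fun _ _ => convex_Icc 0 1)).add
    (convexOn_sum_apply (convex_Icc 0 1) fun i _ => convexOn_sitePotential hσw hσn hσwn (hSk i))

lemma strictConvexOn_energy (hΔt : 0 < Δt) (hσw : 0 ≤ σw) (hσn : 0 ≤ σn)
    (hσwn : σwn ≤ (σw + σn) / 2) (hQ : Q.PosSemidef) (hSk : ∀ i, Sk i ∈ Ioo (0 : ℝ) 1) :
    StrictConvexOn ℝ (univ.pi fun _ => Icc 0 1) (energy Q Sk f Δt σw σn σwn) := by
  rw [show energy Q Sk f Δt σw σn σwn = _ from funext (energy_eq Q Sk f Δt σw σn σwn)]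
  exact (convexOn_quadratic_add_sitePotential hσw hσn hσwn hQ hSk).add_strictConvexOn
    ((strictConvexOn_sum_apply (convex_Icc 0 1) fun _ => strictConcave_binEntropy.neg).const_mul
      hΔt)

end Energy

section Interior

variable {ι : Type*} [Fintype ι] {Q : Matrix ι ι ℝ} {Sk f : ι → ℝ} {Δt σw σn σwn : ℝ}

lemma exists_energy_lt_of_boundary (hΔt : 0 < Δt) (hσw : 0 ≤ σw) (hσn : 0 ≤ σn)
    (hσwn : σwn ≤ (σw + σn) / 2) (hQ : Q.PosSemidef) (hSk : ∀ i, Sk i ∈ Ioo (0 : ℝ) 1)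
    {β : ℝ} {S : ι → ℝ} (hS : S ∈ cubeSlice ι β) {i j : ι} (hij : i ≠ j) (hi : S i < 1)
    (hj : 0 < S j) (hbd : S i = 0 ∨ S j = 1) :
    ∃ T ∈ cubeSlice ι β, energy Q Sk f Δt σw σn σwn T < energy Q Sk f Δt σw σn σwn S := by
  classical
  set d : ι → ℝ := Pi.single i 1 - Pi.single j 1
  set δ := min (1 - S i) (S j)
  have hδ : 0 < δ := lt_min (sub_pos.2 hi) hj
  have hpath : ∀ ε ∈ Icc 0 δ, S + ε • d ∈ cubeSlice ι β := fun ε hε =>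
    add_smul_single_sub_single_mem_cubeSlice hS hij hε.1 (hε.2.trans (min_le_left _ _))
      (hε.2.trans (min_le_right _ _))
  -- `k` is the boundary coordinate; along the path it equals `ε` or `1 - ε`
  obtain ⟨k, hk⟩ : ∃ k, ∀ ε, binEntropy ((S + ε • d) k) = binEntropy ε := by
    rcases hbd with h | h
    · exact ⟨i, fun ε => by simp [d, h, hij]⟩
    · refine ⟨j, fun ε => ?_⟩
      rw [← binEntropy_one_sub]
      simp [d, h, hij.symm]
  set G : (ι → ℝ) → ℝ := fun T => 1 / 2 * ((T - Sk) ⬝ᵥ Q *ᵥ (T - Sk)) +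
    ∑ i, sitePotential σw σn σwn (Sk i) (f i) (T i) +
      Δt * ∑ i ∈ Finset.univ.erase k, -binEntropy (T i)
  have hG : ConvexOn ℝ (univ.pi fun _ => Icc 0 1) G :=
    (convexOn_quadratic_add_sitePotential hσw hσn hσwn hQ hSk).add
      ((convexOn_sum_apply (convex_Icc 0 1) fun _ _ => strictConcave_binEntropy.neg.convexOn).smul
        hΔt.le)
  have hsplit : ∀ T, energy Q Sk f Δt σw σn σwn T = G T - Δt * binEntropy (T k) := by
    intro T
    rw [energy_eq, ← Finset.add_sum_erase _ (fun i => -binEntropy (T i)) (Finset.mem_univ k)]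
    ring
  obtain ⟨ε, hε, hlt⟩ := exists_lt_of_convexOn_sub_binEntropy
    (hG.comp_add_smul (convex_Icc 0 δ) fun ε hε => cubeSlice_subset_pi β (hpath ε hε))
    hΔt hδ ((min_le_right _ _).trans (hS.1 j).2)
  refine ⟨S + ε • d, hpath ε (Ioo_subset_Icc_self hε), ?_⟩
  have hk₀ := hk 0
  simp only [zero_smul, add_zero, binEntropy_zero] at hk₀ hlt
  rw [hsplit, hsplit, hk, hk₀]
  linarith

lemma mem_Ioo_of_isMinOn_energy (hΔt : 0 < Δt) (hσw : 0 ≤ σw) (hσn : 0 ≤ σn)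
    (hσwn : σwn ≤ (σw + σn) / 2) (hQ : Q.PosSemidef) (hSk : ∀ i, Sk i ∈ Ioo (0 : ℝ) 1)
    {β : ℝ} (hβ₀ : 0 < β) (hβ₁ : β < Fintype.card ι) {S : ι → ℝ} (hS : S ∈ cubeSlice ι β)
    (hmin : IsMinOn (energy Q Sk f Δt σw σn σwn) (cubeSlice ι β) S) (k : ι) :
    S k ∈ Ioo 0 1 := by
  by_contra hk
  obtain ⟨i, j, hij, hi, hj, hbd⟩ : ∃ i j, i ≠ j ∧ S i < 1 ∧ 0 < S j ∧ (S i = 0 ∨ S j = 1) := by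
    rcases (hS.1 k).1.eq_or_lt with h | h
    · obtain ⟨j, -, hj⟩ := Finset.exists_lt_of_sum_lt (s := Finset.univ) (f := 0) (g := S)
        (by simpa [hS.2] using hβ₀)
      exact ⟨k, j, by rintro rfl; simp [← h] at hj, by simp [← h], hj, Or.inl h.symm⟩
    · have h1 : S k = 1 := by
        by_contra h1
        exact hk ⟨h, (hS.1 k).2.lt_of_ne h1⟩
      obtain ⟨i, -, hi⟩ := Finset.exists_lt_of_sum_lt (s := Finset.univ) (f := S) (g := 1)
        (by simpa [hS.2] using hβ₁)
      exact ⟨i, k, by rintro rfl; simp [h1] at hi, hi, h, Or.inr h1⟩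
  obtain ⟨T, hT, hlt⟩ :=
    exists_energy_lt_of_boundary hΔt hσw hσn hσwn hQ hSk hS hij hi hj hbd
  exact (isMinOn_iff.1 hmin T hT).not_gt hlt

end Interior

theorem stmt12_general (N : ℕ) (σw σn σwn Δt : ℝ)
    (hσw : 0 < σw) (hσn : 0 < σn) (hcond : σwn < (σw + σn) / 2)
    (hΔt : 0 < Δt) (f : Fin N → ℝ)
    (Q : Matrix (Fin N) (Fin N) ℝ) (hQ : Q.PosSemidef)
    (Sk : Fin N → ℝ) (hSk : ∀ i, Sk i ∈ Set.Ioo (0 : ℝ) 1) :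
    let β : ℝ := ∑ i, Sk i
    let Φ : ℝ → ℝ := fun x => x * Real.log x
    let J : (Fin N → ℝ) → ℝ := fun S =>
      (1 / 2) * dotProduct (S - Sk) (Q.mulVec (S - Sk)) +
      ∑ i, (Δt * (Φ (S i) + Φ (1 - S i)) + σw * Hzero (Sk i) (S i) +
        σn * Hzero (1 - Sk i) (1 - S i) - σwn / 2 * (S i) ^ 2 + f i * S i)
    let K : Set (Fin N → ℝ) :=
      {S | (∀ i, S i ∈ Set.Icc (0 : ℝ) 1) ∧ ∑ i, S i = β}
    ∃ Sstar ∈ K, (∀ i, Sstar i ∈ Set.Ioo (0 : ℝ) 1) ∧ IsMinOn J K Sstar ∧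
      ∀ S ∈ K, IsMinOn J K S → S = Sstar := by
  intro β Φ J K
  have hσwn : σwn ≤ (σw + σn) / 2 := hcond.le
  have hJ : StrictConvexOn ℝ K J :=
    (strictConvexOn_energy hΔt hσw.le hσn.le hσwn hQ hSk).subset (cubeSlice_subset_pi β)
      (convex_cubeSlice β)
  have hSkK : Sk ∈ K := ⟨fun i => Ioo_subset_Icc_self (hSk i), rfl⟩
  obtain ⟨Sstar, hSstar, hmin⟩ :=
    (isCompact_cubeSlice β).exists_isMinOn ⟨Sk, hSkK⟩ (continuous_energy hSk).continuousOn
  refine ⟨Sstar, hSstar, fun k => ?_, hmin,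
    fun S hS hSmin => hJ.eq_of_isMinOn hSmin hmin hS hSstar⟩
  have hne : (Finset.univ : Finset (Fin N)).Nonempty := ⟨k, Finset.mem_univ k⟩
  have hβ₁ : β < Fintype.card (Fin N) := by
    simpa using Finset.sum_lt_sum_of_nonempty hne fun i _ => (hSk i).2
  exact mem_Ioo_of_isMinOn_energy hΔt hσw.le hσn.le hσwn hQ hSk
    (Finset.sum_pos (fun i _ => (hSk i).1) hne) hβ₁ hSstar hmin k

/-- Unique solvability and bound preservation for the second-order scheme
(finite-dimensional core): under the parameter constraint `σ_wn < (σ_w + σ_n)/2`,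
the discrete energy functional `J` attains its minimum over the constrained set `K`
at a unique point, and this minimizer has all components in `(0,1)`. -/
theorem stmt12 (N : ℕ) (hN : 1 ≤ N) (σw σn σwn Δt : ℝ)
    (hσw : 0 < σw) (hσn : 0 < σn) (hσwn : 0 < σwn) (hcond : σwn < (σw + σn) / 2)
    (hΔt : 0 < Δt) (f : Fin N → ℝ)
    (Q : Matrix (Fin N) (Fin N) ℝ) (hQ : Q.PosSemidef)
    (Sk : Fin N → ℝ) (hSk : ∀ i, Sk i ∈ Set.Ioo (0 : ℝ) 1) :
    let β : ℝ := ∑ i, Sk i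
    let Φ : ℝ → ℝ := fun x => x * Real.log x
    let J : (Fin N → ℝ) → ℝ := fun S =>
      (1 / 2) * dotProduct (S - Sk) (Q.mulVec (S - Sk)) +
      ∑ i, (Δt * (Φ (S i) + Φ (1 - S i)) + σw * Hzero (Sk i) (S i) +
        σn * Hzero (1 - Sk i) (1 - S i) - σwn / 2 * (S i) ^ 2 + f i * S i)
    let K : Set (Fin N → ℝ) :=
      {S | (∀ i, S i ∈ Set.Icc (0 : ℝ) 1) ∧ ∑ i, S i = β}
    ∃ Sstar ∈ K, (∀ i, Sstar i ∈ Set.Ioo (0 : ℝ) 1) ∧ IsMinOn J K Sstar ∧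
      ∀ S ∈ K, IsMinOn J K S → S = Sstar :=
  stmt12_general N σw σn σwn Δt hσw hσn hcond hΔt f Q hQ Sk hSk
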